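/- arXiv:2309.15115 — 4 statements merged into one kernel-verified Lean document; each statement's English description precedes it below -/
import Mathlib

section
/- Let σ₁, σ₂, σ₃ ∈ {-1,1}^n with σᵢ ≠ ±σⱼ for all 1 ≤ i < j ≤ 3, and let Σ ∈ ℝ^{3×3} be the Gram matrix with entries Σ_{ij} = (1/n)⟨σᵢ, σⱼ⟩. Then det(Σ) ≥ n^{-3}. -/
open Matrix Finset

/-- If a sign vector is a linear combination of two sign vectors that are distinct up to
sign, then it equals one of them up to sign. -/
lemma sign_comb {n : ℕ} (a b c : Fin n → ℝ)
    (ha : ∀ k, a k = 1 ∨ a k = -1) (hb : ∀ k, b k = 1 ∨ b k = -1)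
    (hc : ∀ k, c k = 1 ∨ c k = -1)
    (hab : a ≠ b) (hab' : a ≠ -b)
    {α β : ℝ} (h : ∀ k, c k = α * a k + β * b k) :
    c = a ∨ c = -a ∨ c = b ∨ c = -b := by
  obtain ⟨k1, hk1⟩ : ∃ k, a k ≠ b k := by
    by_contra hcon; push_neg at hcon; exact hab (funext hcon)
  obtain ⟨k2, hk2⟩ : ∃ k, a k ≠ -(b k) := by
    by_contra hcon; push_neg at hcon
    exact hab' (funext fun k => by simpa using hcon k)
  have hbk1 : b k1 = -(a k1) := by
    rcases ha k1 with h1 | h1 <;> rcases hb k1 with h2 | h2 <;>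
      simp [h1, h2] at hk1 ⊢
  have hbk2 : b k2 = a k2 := by
    rcases ha k2 with h1 | h1 <;> rcases hb k2 with h2 | h2 <;>
      simp [h1, h2] at hk2 ⊢
  have hsq1 : (α - β) ^ 2 = 1 := by
    have e := h k1
    rw [hbk1] at e
    have ha1 : a k1 * a k1 = 1 := by rcases ha k1 with h1 | h1 <;> simp [h1]
    have hc1 : c k1 * c k1 = 1 := by rcases hc k1 with h1 | h1 <;> simp [h1]
    calc (α - β) ^ 2 = (α - β) ^ 2 * (a k1 * a k1) := by rw [ha1, mul_one]
      _ = (α * a k1 + β * -a k1) * (α * a k1 + β * -a k1) := by ring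
      _ = c k1 * c k1 := by rw [← e]
      _ = 1 := hc1
  have hsq2 : (α + β) ^ 2 = 1 := by
    have e := h k2
    rw [hbk2] at e
    have ha1 : a k2 * a k2 = 1 := by rcases ha k2 with h1 | h1 <;> simp [h1]
    have hc1 : c k2 * c k2 = 1 := by rcases hc k2 with h1 | h1 <;> simp [h1]
    calc (α + β) ^ 2 = (α + β) ^ 2 * (a k2 * a k2) := by rw [ha1, mul_one]
      _ = (α * a k2 + β * a k2) * (α * a k2 + β * a k2) := by ring
      _ = c k2 * c k2 := by rw [← e]
      _ = 1 := hc1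
  have hzero : α = 0 ∨ β = 0 := by
    have : α * β = 0 := by nlinarith
    exact mul_eq_zero.mp this
  rcases hzero with hz | hz
  · -- α = 0, so β = ±1 and c = ±b
    subst hz
    have hβ : β = 1 ∨ β = -1 := by
      rcases mul_self_eq_one_iff.mp (by nlinarith : β * β = 1) with h' | h'
      · exact Or.inl h'
      · exact Or.inr h'
    rcases hβ with h' | h'
    · subst h'
      exact Or.inr (Or.inr (Or.inl (funext fun k => by simpa using h k)))
    · subst h'
      exact Or.inr (Or.inr (Or.inr (funext fun k => by simpa using h k)))
  · -- β = 0, so α = ±1 and c = ±a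
    subst hz
    have hα : α = 1 ∨ α = -1 := by
      rcases mul_self_eq_one_iff.mp (by nlinarith : α * α = 1) with h' | h'
      · exact Or.inl h'
      · exact Or.inr h'
    rcases hα with h' | h'
    · subst h'
      exact Or.inl (funext fun k => by simpa using h k)
    · subst h'
      exact Or.inr (Or.inl (funext fun k => by simpa using h k))

/-- Linear independence (in kernel form) of the three sign vectors. -/
lemma sign_indep {n : ℕ} (hn : 0 < n) (σ : Fin 3 → (Fin n → ℝ))
    (hsign : ∀ i k, σ i k = 1 ∨ σ i k = -1)
    (hne : ∀ i j : Fin 3, i < j → σ i ≠ σ j ∧ σ i ≠ -σ j)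
    (x : Fin 3 → ℝ) (h : ∀ k, ∑ i, x i * σ i k = 0) : x = 0 := by
  have h3 : ∀ k, x 0 * σ 0 k + x 1 * σ 1 k + x 2 * σ 2 k = 0 := by
    intro k; have := h k; rwa [Fin.sum_univ_three] at this
  have h01 := hne 0 1 (by decide)
  have h02 := hne 0 2 (by decide)
  have h12 := hne 1 2 (by decide)
  have neg_cases : ∀ i j : Fin 3, σ i ≠ σ j → σ i ≠ -σ j →
      ¬ (σ i = σ j ∨ σ i = -σ j) := by tauto
  by_cases hx2 : x 2 = 0
  · by_cases hx1 : x 1 = 0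
    · -- then x 0 * σ 0 k = 0
      have hx0 : x 0 = 0 := by
        have := h3 ⟨0, hn⟩
        rw [hx1, hx2] at this
        have hσ : σ 0 ⟨0, hn⟩ = 1 ∨ σ 0 ⟨0, hn⟩ = -1 := hsign 0 ⟨0, hn⟩
        rcases hσ with h' | h' <;> rw [h'] at this <;> linarith
      funext i
      fin_cases i <;> simp [hx0, hx1, hx2]
    · -- σ 1 = α σ 0 + β σ 2
      exfalso
      have key : ∀ k, σ 1 k = (-(x 0) / x 1) * σ 0 k + (-(x 2) / x 1) * σ 2 k := by
        intro k
        have hk := h3 k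
        field_simp
        linear_combination hk
      rcases sign_comb (σ 0) (σ 2) (σ 1) (hsign 0) (hsign 2) (hsign 1)
          h02.1 h02.2 key with h' | h' | h' | h'
      · exact h01.1 h'.symm
      · exact h01.2 (by rw [h']; funext k; simp)
      · exact h12.1 h'
      · exact h12.2 h'
  · -- σ 2 = α σ 0 + β σ 1
    exfalso
    have key : ∀ k, σ 2 k = (-(x 0) / x 2) * σ 0 k + (-(x 1) / x 2) * σ 1 k := by
      intro k
      have hk := h3 k
      field_simp
      linear_combination hk
    rcases sign_comb (σ 0) (σ 1) (σ 2) (hsign 0) (hsign 1) (hsign 2)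
        h01.1 h01.2 key with h' | h' | h' | h'
    · exact h02.1 h'.symm
    · exact h02.2 (by rw [h']; funext k; simp)
    · exact h12.1 h'.symm
    · exact h12.2 (by rw [h']; funext k; simp)

/-- The normalized Gram matrix of three sign vectors, pairwise distinct up to sign,
has determinant at least `n⁻³`. -/
theorem gram_det_lower_bound (n : ℕ) (σ : Fin 3 → (Fin n → ℝ))
    (hsign : ∀ i k, σ i k = 1 ∨ σ i k = -1)
    (hne : ∀ i j : Fin 3, i < j → σ i ≠ σ j ∧ σ i ≠ -σ j) :
    ((n : ℝ)⁻¹) ^ 3 ≤ (Matrix.of fun i j : Fin 3 => (n : ℝ)⁻¹ * ∑ k, σ i k * σ j k).det := by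
  -- n > 0
  have hn : 0 < n := by
    rcases Nat.eq_zero_or_pos n with h | h
    · exfalso
      subst h
      exact (hne 0 1 (by decide)).1 (funext fun k => k.elim0)
    · exact h
  -- the unnormalized Gram matrix
  set M : Matrix (Fin 3) (Fin 3) ℝ := Matrix.of fun i j => ∑ k, σ i k * σ j k with hM
  have hsplit : (Matrix.of fun i j : Fin 3 => (n : ℝ)⁻¹ * ∑ k, σ i k * σ j k)
      = ((n : ℝ)⁻¹) • M := by
    ext i j
    simp [hM, Matrix.smul_apply]
  -- M is positive definite
  have hposdef : M.PosDef := by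
    refine Matrix.PosDef.of_dotProduct_mulVec_pos ?_ ?_
    · ext i j
      simp only [hM, Matrix.conjTranspose_apply, Matrix.of_apply, star_trivial]
      exact Finset.sum_congr rfl fun k _ => mul_comm _ _
    · intro x hx
      have hquad : star x ⬝ᵥ M *ᵥ x = ∑ k, (∑ i, x i * σ i k) ^ 2 := by
        have lhs : star x ⬝ᵥ M *ᵥ x
            = ∑ i, ∑ j, ∑ k, (x i * σ i k) * (x j * σ j k) := by
          simp only [star_trivial, dotProduct, Matrix.mulVec, dotProduct,
            hM, Matrix.of_apply]
          refine Finset.sum_congr rfl fun i _ => ?_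
          rw [Finset.mul_sum]
          refine Finset.sum_congr rfl fun j _ => ?_
          rw [Finset.sum_mul, Finset.mul_sum]
          refine Finset.sum_congr rfl fun k _ => ?_
          ring
        have rhs : ∑ k, (∑ i, x i * σ i k) ^ 2
            = ∑ k, ∑ i, ∑ j, (x i * σ i k) * (x j * σ j k) := by
          refine Finset.sum_congr rfl fun k _ => ?_
          rw [sq, Finset.sum_mul_sum]
        rw [lhs, rhs]
        calc ∑ i, ∑ j, ∑ k, (x i * σ i k) * (x j * σ j k)
            = ∑ i, ∑ k, ∑ j, (x i * σ i k) * (x j * σ j k) :=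
              Finset.sum_congr rfl fun i _ => Finset.sum_comm
          _ = ∑ k, ∑ i, ∑ j, (x i * σ i k) * (x j * σ j k) := Finset.sum_comm
      rw [hquad]
      have hge : (0:ℝ) ≤ ∑ k, (∑ i, x i * σ i k) ^ 2 :=
        Finset.sum_nonneg fun k _ => sq_nonneg _
      rcases hge.lt_or_eq with h | h
      · exact h
      · exfalso
        have hz : ∀ k ∈ Finset.univ, (∑ i, x i * σ i k) ^ 2 = 0 :=
          (Finset.sum_eq_zero_iff_of_nonneg (fun k _ => sq_nonneg _)).mp h.symm
        refine hx (sign_indep hn σ hsign hne x fun k => ?_)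
        exact sq_eq_zero_iff.mp (hz k (Finset.mem_univ k))
  have hdetpos : 0 < M.det := hposdef.det_pos
  -- M has integer entries, so its determinant is an integer
  set N : Matrix (Fin 3) (Fin 3) ℤ := Matrix.of fun i j =>
    ∑ k, (if σ i k = 1 then (1:ℤ) else -1) * (if σ j k = 1 then (1:ℤ) else -1) with hN
  have hcast : M = N.map ((↑) : ℤ → ℝ) := by
    ext i j
    simp only [hM, hN, Matrix.map_apply, Matrix.of_apply, Int.cast_sum, Int.cast_mul]
    refine Finset.sum_congr rfl fun k _ => ?_
    rcases hsign i k with h1 | h1 <;> rcases hsign j k with h2 | h2 <;>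
      rw [h1, h2] <;> norm_num
  have hdetint : M.det = ((N.det : ℤ) : ℝ) := by
    rw [hcast]
    exact (RingHom.map_det (Int.castRingHom ℝ) N).symm
  have hNpos : 0 < N.det := by
    have : (0:ℝ) < ((N.det : ℤ) : ℝ) := hdetint ▸ hdetpos
    exact_mod_cast this
  have hone : (1:ℝ) ≤ M.det := by
    rw [hdetint]
    exact_mod_cast hNpos
  rw [hsplit, Matrix.det_smul]
  simp only [Fintype.card_fin]
  have hpos : (0:ℝ) < ((n : ℝ)⁻¹) ^ 3 := by positivity
  nlinarith
end

section
/- For all integers 1 ≤ k ≤ n−1, the binomial coefficient satisfies √(n/(8k(n−k))) · 2^{n·h(k/n)} ≤ C(n,k) ≤ √(n/(π k(n−k))) · 2^{n·h(k/n)}, where h(p) = −p·log₂ p − (1−p)·log₂(1−p) is the binary entropy function. -/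
/-- The binary entropy function with logarithm base 2. -/
noncomputable def binEnt (p : ℝ) : ℝ := -p * Real.logb 2 p - (1 - p) * Real.logb 2 (1 - p)

open Real Stirling Finset

lemma stirling_anti {a b : ℕ} (ha : 1 ≤ a) (hab : a ≤ b) :
    stirlingSeq b ≤ stirlingSeq a := by
  obtain ⟨a', rfl⟩ : ∃ a', a = a' + 1 := ⟨a-1, by omega⟩
  obtain ⟨b', rfl⟩ : ∃ b', b = b' + 1 := ⟨b-1, by omega⟩
  exact Stirling.stirlingSeq'_antitone (by omega)

lemma sqrt_pi_le_stirling {m : ℕ} (hm : 1 ≤ m) : Real.sqrt Real.pi ≤ stirlingSeq m := by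
  refine le_of_tendsto Stirling.tendsto_stirlingSeq_sqrt_pi ?_
  filter_upwards [Filter.eventually_ge_atTop m] with i hi
  exact stirling_anti hm hi

lemma stirling_pos {m : ℕ} (hm : 1 ≤ m) : 0 < stirlingSeq m := by
  obtain ⟨a', rfl⟩ : ∃ a', m = a' + 1 := ⟨m-1, by omega⟩
  exact Stirling.stirlingSeq'_pos a'

lemma stirling_two : stirlingSeq 2 = Real.exp 1 ^ 2 / 4 := by
  have h4 : Real.sqrt (2 * ((2:ℕ):ℝ)) = 2 := by
    norm_num
  rw [Stirling.stirlingSeq, h4]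
  have he : Real.exp 1 ≠ 0 := (Real.exp_pos 1).ne'
  norm_num [Nat.factorial]
  field_simp
  rw [← Real.exp_nat_mul]; norm_num; ring

lemma fact_eq (m : ℕ) (hm : 1 ≤ m) :
    (m.factorial : ℝ) = stirlingSeq m * (Real.sqrt (2*m) * ((m:ℝ)/Real.exp 1)^m) := by
  have hm0 : (0:ℝ) < m := by exact_mod_cast hm
  have h1 : Real.sqrt (2*m) ≠ 0 := by positivity
  have h2 : ((m:ℝ)/Real.exp 1)^m ≠ 0 := by positivity
  rw [Stirling.stirlingSeq]
  field_simp


lemma entropy_pow (n k : ℕ) (hk1 : 1 ≤ k) (hkn : k < n) :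
    (2:ℝ) ^ ((n:ℝ) * binEnt ((k:ℝ)/(n:ℝ))) = (n:ℝ)^n / ((k:ℝ)^k * ((n:ℝ)-k)^(n-k)) := by
  have hn0 : (0:ℝ) < n := by exact_mod_cast Nat.pos_of_ne_zero (by omega)
  have hk0 : (0:ℝ) < k := by exact_mod_cast hk1
  have hnk : (0:ℝ) < (n:ℝ) - k := by
    have : (k:ℝ) < n := by exact_mod_cast hkn
    linarith
  have hcast : ((n-k:ℕ):ℝ) = (n:ℝ)-k := Nat.cast_sub hkn.le
  have h1p : 1 - (k:ℝ)/n = ((n:ℝ)-k)/n := by field_simp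
  have harg : (n:ℝ) * binEnt ((k:ℝ)/n)
      = Real.logb 2 ((k:ℝ)/n) * (-(k:ℝ)) + Real.logb 2 (((n:ℝ)-k)/n) * (-((n:ℝ)-(k:ℝ))) := by
    rw [binEnt, h1p]
    field_simp
    ring
  rw [harg, Real.rpow_add (by norm_num : (0:ℝ) < 2),
    Real.rpow_mul (by norm_num : (0:ℝ) ≤ 2), Real.rpow_mul (by norm_num : (0:ℝ) ≤ 2),
    Real.rpow_logb (by norm_num) (by norm_num) (by positivity),
    Real.rpow_logb (by norm_num) (by norm_num) (by positivity),
    Real.rpow_neg (by positivity), Real.rpow_neg (by positivity),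
    ← hcast, Real.rpow_natCast, Real.rpow_natCast]
  rw [div_pow, div_pow]
  have hnn : (n:ℝ)^k * (n:ℝ)^(n-k) = (n:ℝ)^n := by
    rw [← pow_add]; congr 1; omega
  have h1 : ((k:ℝ)^k) ≠ 0 := by positivity
  have h2 : (((n:ℝ)-k)^(n-k)) ≠ 0 := by positivity
  have h3 : ((n:ℝ)^k) ≠ 0 := by positivity
  have h4 : ((n:ℝ)^(n-k)) ≠ 0 := by positivity
  field_simp
  exact hnn

lemma choose_eq (n k : ℕ) (hk1 : 1 ≤ k) (hkn : k < n) :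
    (n.choose k : ℝ) = stirlingSeq n / (stirlingSeq k * stirlingSeq (n-k)) *
      (Real.sqrt (2*n) / (Real.sqrt (2*(k:ℝ)) * Real.sqrt (2*((n:ℝ)-k)))) *
      ((n:ℝ)^n / ((k:ℝ)^k * ((n:ℝ)-k)^(n-k))) := by
  have hcast : ((n-k:ℕ):ℝ) = (n:ℝ)-k := Nat.cast_sub hkn.le
  have hn0 : (0:ℝ) < n := by exact_mod_cast Nat.pos_of_ne_zero (by omega)
  have hk0 : (0:ℝ) < k := by exact_mod_cast hk1
  have hnk : (0:ℝ) < (n:ℝ) - k := by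
    have : (k:ℝ) < n := by exact_mod_cast hkn
    linarith
  have he : (0:ℝ) < Real.exp 1 := Real.exp_pos 1
  have hek : Real.exp 1 ^ k * Real.exp 1 ^ (n-k) = Real.exp 1 ^ n := by
    rw [← pow_add]; congr 1; omega
  rw [Nat.cast_choose ℝ hkn.le, fact_eq n (by omega), fact_eq k hk1, fact_eq (n-k) (by omega),
    hcast]
  rw [div_pow, div_pow, div_pow]
  have hAn : 0 < stirlingSeq n := stirling_pos (by omega)
  have hAk : 0 < stirlingSeq k := stirling_pos hk1
  have hAj : 0 < stirlingSeq (n-k) := stirling_pos (by omega)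
  have hSn : (0:ℝ) < Real.sqrt (2*(n:ℝ)) := by positivity
  have hSk : (0:ℝ) < Real.sqrt (2*(k:ℝ)) := by positivity
  have hSj : (0:ℝ) < Real.sqrt (2*((n:ℝ)-k)) := by positivity
  have h1 : ((k:ℝ)^k) ≠ 0 := by positivity
  have h2 : (((n:ℝ)-k)^(n-k)) ≠ 0 := by positivity
  have h3 : ((n:ℝ)^n) ≠ 0 := by positivity
  have h4 : (Real.exp 1 ^ k) ≠ 0 := by positivity
  have h5 : (Real.exp 1 ^ (n-k)) ≠ 0 := by positivity
  have h6 : (Real.exp 1 ^ n) ≠ 0 := by positivity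
  have hek' : Real.exp (k:ℝ) * Real.exp ((n-k:ℕ):ℝ) = Real.exp (n:ℝ) := by
    rw [← Real.exp_add]; congr 1; rw [hcast]; ring
  field_simp
  exact hek


lemma log_one_add_inv_le {x : ℝ} (hx : 2 ≤ x) :
    Real.log (1 + 1/x) ≤ 1/x - 1/(2*x^2) + 1/(x^2*(x-1)) := by
  have hx0 : (0:ℝ) < x := by linarith
  have hx1 : (0:ℝ) < x - 1 := by linarith
  have h1 : |(-(1/x))| < 1 := by
    rw [abs_neg, abs_of_nonneg (by positivity)]
    rw [div_lt_one hx0]; linarith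
  have h0 : (0:ℝ) < 1 - 1/x := by
    rw [sub_pos, div_lt_one hx0]; linarith
  have hB := Real.abs_log_sub_add_sum_range_le h1 2
  rw [Finset.sum_range_succ, Finset.sum_range_succ, Finset.sum_range_zero] at hB
  have h2 : (1:ℝ) - (-(1/x)) = 1 + 1/x := by ring
  have h3 : |(-(1/x))| = 1/x := by rw [abs_neg, abs_of_nonneg (by positivity)]
  rw [h2, h3] at hB
  have h4 := (abs_le.mp hB).2
  have h5 : (1/x)^(2+1)/(1 - 1/x) = 1/(x^2*(x-1)) := by
    rw [div_eq_div_iff h0.ne' (by positivity)]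
    field_simp; ring_nf; rw [← mul_pow, mul_inv_cancel₀ hx0.ne', one_pow]
  rw [h5] at h4
  have e1 : (0:ℝ) + (-(1/x))^(0+1)/((0:ℕ)+1) + (-(1/x))^(1+1)/((1:ℕ)+1)
      = -(1/x) + 1/(2*x^2) := by
    push_cast; field_simp; ring
  rw [e1] at h4
  linarith

lemma key8 (m : ℕ) (hm : 1 ≤ m) : ((m:ℝ)+1)^(2*m+1) ≤ 8 * (m:ℝ)^(2*m+1) := by
  by_cases h6 : m ≤ 5
  · interval_cases m <;> norm_num
  · push_neg at h6
    have h6' : (6:ℕ) ≤ m := h6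
    set x : ℝ := (m:ℝ) with hxdef
    have hx : (6:ℝ) ≤ x := by rw [hxdef]; exact_mod_cast h6'
    have hx0 : (0:ℝ) < x := by linarith
    have hlog := log_one_add_inv_le (by linarith : (2:ℝ) ≤ x)
    have hmain : (2*x+1) * Real.log (1 + 1/x) ≤ 3 * Real.log 2 := by
      have hl2 : (0.6931471803:ℝ) < Real.log 2 := Real.log_two_gt_d9
      have h1 : (2*x+1) * Real.log (1+1/x) ≤ (2*x+1) * (1/x - 1/(2*x^2) + 1/(x^2*(x-1))) :=
        mul_le_mul_of_nonneg_left hlog (by linarith)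
      refine h1.trans ?_
      have hd : (0:ℝ) < 2*x^2*(x-1) := by nlinarith
      have hxne : x ≠ 0 := hx0.ne'
      have hx1ne : x - 1 ≠ 0 := by intro h; nlinarith
      have key : (2*x+1) * (1/x - 1/(2*x^2) + 1/(x^2*(x-1)))
          = (4*x^3 - 4*x^2 + 3*x + 3)/(2*x^2*(x-1)) := by
        field_simp; ring
      rw [key, div_le_iff₀ hd]
      nlinarith [sq_nonneg (x-6), sq_nonneg x, mul_nonneg (sq_nonneg (x-6)) hx0.le]
    have hL : Real.log (((m:ℝ)+1)^(2*m+1)) ≤ Real.log (8 * (m:ℝ)^(2*m+1)) := by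
      rw [Real.log_pow, Real.log_mul (by norm_num) (by positivity), Real.log_pow]
      have h8 : Real.log 8 = 3 * Real.log 2 := by
        rw [show (8:ℝ) = 2^3 by norm_num, Real.log_pow]; push_cast; ring
      have hlq : Real.log (1 + 1/x) = Real.log (x+1) - Real.log x := by
        rw [show 1 + 1/x = (x+1)/x by field_simp, Real.log_div (by linarith) (by linarith)]
      rw [hlq] at hmain
      rw [h8]
      push_cast
      nlinarith [hmain]
    exact (Real.log_le_log_iff (by positivity) (by positivity)).mp hL


lemma sqrt_ratio (n k : ℕ) (hk0 : (0:ℝ) < k) (hnk : (0:ℝ) < (n:ℝ)-k) :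
    Real.sqrt (2*(n:ℝ)) / (Real.sqrt (2*(k:ℝ)) * Real.sqrt (2*((n:ℝ)-k)))
      = Real.sqrt ((n:ℝ)/(2*k*((n:ℝ)-k))) := by
  have hn0 : (0:ℝ) < n := by linarith
  rw [← Real.sqrt_mul (by positivity : (0:ℝ) ≤ 2*(k:ℝ)),
      ← Real.sqrt_div (by positivity : (0:ℝ) ≤ 2*(n:ℝ))]
  congr 1
  field_simp

lemma sqrt8 (n k : ℕ) (hk0 : (0:ℝ) < k) (hnk : (0:ℝ) < (n:ℝ)-k) :
    Real.sqrt ((n:ℝ)/(8*k*((n:ℝ)-k))) = (1/2) * Real.sqrt ((n:ℝ)/(2*k*((n:ℝ)-k))) := by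
  rw [show (n:ℝ)/(8*k*((n:ℝ)-k)) = (1/4) * ((n:ℝ)/(2*k*((n:ℝ)-k))) by
        rw [eq_comm, mul_comm, mul_one_div, div_div]; congr 1; ring,
      Real.sqrt_mul (by norm_num),
      show Real.sqrt (1/4) = 1/2 by
        rw [show (1/4:ℝ) = (1/2)^2 by norm_num, Real.sqrt_sq (by norm_num)]]

lemma sqrtPi (n k : ℕ) (hk0 : (0:ℝ) < k) (hnk : (0:ℝ) < (n:ℝ)-k) :
    Real.sqrt ((n:ℝ)/(Real.pi*k*((n:ℝ)-k)))
      = Real.sqrt (2/Real.pi) * Real.sqrt ((n:ℝ)/(2*k*((n:ℝ)-k))) := by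
  rw [← Real.sqrt_mul (by positivity : (0:ℝ) ≤ 2/Real.pi)]
  congr 1
  have hpi := Real.pi_pos
  field_simp

lemma sqrt_pi_lb : (1.7724:ℝ) ≤ Real.sqrt Real.pi := by
  rw [show (1.7724:ℝ) = Real.sqrt (1.7724^2) from (Real.sqrt_sq (by norm_num)).symm]
  exact Real.sqrt_le_sqrt (by nlinarith [Real.pi_gt_d6])

lemma ratio_upper (n k : ℕ) (hk1 : 1 ≤ k) (hkn : k < n) :
    stirlingSeq n / (stirlingSeq k * stirlingSeq (n-k)) ≤ Real.sqrt (2/Real.pi) := by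
  have hAk : Real.sqrt Real.pi ≤ stirlingSeq k := sqrt_pi_le_stirling hk1
  have hAj : Real.sqrt Real.pi ≤ stirlingSeq (n-k) := sqrt_pi_le_stirling (by omega)
  have hAn : stirlingSeq n ≤ Real.exp 1 / Real.sqrt 2 := by
    rw [← Stirling.stirlingSeq_one]
    exact stirling_anti le_rfl (by omega)
  have hpi := Real.pi_pos
  have hs : (0:ℝ) < Real.sqrt Real.pi := Real.sqrt_pos.mpr hpi
  have hd : Real.sqrt Real.pi * Real.sqrt Real.pi ≤ stirlingSeq k * stirlingSeq (n-k) :=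
    mul_le_mul hAk hAj hs.le (by linarith [sqrt_pi_le_stirling hk1, hs])
  have hms : Real.sqrt Real.pi * Real.sqrt Real.pi = Real.pi := Real.mul_self_sqrt hpi.le
  have step1 : stirlingSeq n / (stirlingSeq k * stirlingSeq (n-k))
      ≤ (Real.exp 1 / Real.sqrt 2) / Real.pi := by
    rw [← hms]
    exact div_le_div₀ (by positivity) hAn (by rw [hms]; exact hpi) hd
  refine step1.trans ?_
  -- (e/√2)/π ≤ √(2/π)  ⟺  e²/(2π²) ≤ 2/π  ⟺  e² ≤ 4π
  have he : Real.exp 1 ≤ 2.7182818286 := Real.exp_one_lt_d9.le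
  have he0 : (0:ℝ) < Real.exp 1 := Real.exp_pos 1
  have h2 : Real.sqrt 2 * Real.sqrt 2 = 2 := Real.mul_self_sqrt (by norm_num)
  have h2p : (0:ℝ) < Real.sqrt 2 := Real.sqrt_pos.mpr (by norm_num)
  rw [← Real.sqrt_sq (by positivity : (0:ℝ) ≤ Real.exp 1 / Real.sqrt 2 / Real.pi)]
  apply Real.sqrt_le_sqrt
  rw [div_pow, div_pow, Real.sq_sqrt (by norm_num : (0:ℝ) ≤ 2),
    div_le_div_iff₀ (by positivity) hpi]
  have hpi4 : (3.141592:ℝ) < Real.pi := Real.pi_gt_d6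
  nlinarith [mul_le_mul he he he0.le (by norm_num : (0:ℝ) ≤ 2.7182818286), hpi4, hpi,
    sq_nonneg Real.pi]

lemma ratio_lower (n k : ℕ) (hk2 : 2 ≤ k) (hkn2 : k + 2 ≤ n) :
    (1/2 : ℝ) ≤ stirlingSeq n / (stirlingSeq k * stirlingSeq (n-k)) := by
  have e2 : stirlingSeq 2 = Real.exp 1 ^ 2 / 4 := stirling_two
  have hAk : stirlingSeq k ≤ Real.exp 1 ^ 2 / 4 := e2 ▸ stirling_anti (by norm_num) hk2
  have hAj : stirlingSeq (n-k) ≤ Real.exp 1 ^ 2 / 4 := e2 ▸ stirling_anti (by norm_num) (by omega)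
  have hAn : Real.sqrt Real.pi ≤ stirlingSeq n := sqrt_pi_le_stirling (by omega)
  have hk0 : 0 < stirlingSeq k := stirling_pos (by omega)
  have hj0 : 0 < stirlingSeq (n-k) := stirling_pos (by omega)
  have hd : stirlingSeq k * stirlingSeq (n-k) ≤ (Real.exp 1 ^ 2 / 4) * (Real.exp 1 ^ 2 / 4) :=
    mul_le_mul hAk hAj hj0.le (by positivity)
  have hn0 : 0 < stirlingSeq n := stirling_pos (by omega)
  have step1 : Real.sqrt Real.pi / ((Real.exp 1 ^ 2 / 4) * (Real.exp 1 ^ 2 / 4))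
      ≤ stirlingSeq n / (stirlingSeq k * stirlingSeq (n-k)) := by
    exact div_le_div₀ hn0.le hAn (by positivity) hd
  refine le_trans ?_ step1
  rw [le_div_iff₀ (by positivity)]
  have he : Real.exp 1 ≤ 2.7182818286 := Real.exp_one_lt_d9.le
  have he0 : (0:ℝ) < Real.exp 1 := Real.exp_pos 1
  have he2 : Real.exp 1 ^ 2 ≤ 7.3890561 := by nlinarith
  have he4 : Real.exp 1 ^ 2 * Real.exp 1 ^ 2 ≤ 54.5982 := by nlinarith [sq_nonneg (Real.exp 1)]
  nlinarith [sqrt_pi_lb]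

lemma lower_one (n : ℕ) (hn : 2 ≤ n) :
    Real.sqrt ((n:ℝ)/(8*1*((n:ℝ)-1))) * (2:ℝ)^((n:ℝ)*binEnt (1/(n:ℝ))) ≤ (n:ℝ) := by
  have hn0 : (0:ℝ) < n := by exact_mod_cast Nat.pos_of_ne_zero (by omega)
  have hn2 : (2:ℝ) ≤ n := by exact_mod_cast hn
  have hb : (0:ℝ) < (n:ℝ) - 1 := by linarith
  have hE := entropy_pow n 1 le_rfl (by omega)
  rw [Nat.cast_one, one_pow, one_mul] at hE
  rw [hE]
  set m : ℕ := n - 1 with hm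
  have hmc : ((m:ℕ):ℝ) = (n:ℝ) - 1 := by rw [hm]; push_cast [Nat.cast_sub (by omega : 1 ≤ n)]; ring
  have hkey := key8 m (by omega)
  rw [hmc] at hkey
  have hN : (n:ℝ) - 1 + 1 = (n:ℝ) := by ring
  rw [hN] at hkey
  -- step 1 : sqrt bound
  have h1 : Real.sqrt ((n:ℝ)/(8*1*((n:ℝ)-1))) ≤ (((n:ℝ)-1)/(n:ℝ))^m := by
    rw [← Real.sqrt_sq (by positivity : (0:ℝ) ≤ (((n:ℝ)-1)/(n:ℝ))^m)]
    apply Real.sqrt_le_sqrt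
    rw [← pow_mul, div_pow, div_le_div_iff₀ (by positivity) (by positivity)]
    have hx : (n:ℝ) * (n:ℝ)^(m*2) = (n:ℝ)^(2*m+1) := by
      rw [← pow_succ']; congr 1; ring
    have hy : ((n:ℝ)-1)^(m*2) * (8*1*((n:ℝ)-1)) = 8 * ((n:ℝ)-1)^(2*m+1) := by
      rw [show (8:ℝ)*1*((n:ℝ)-1) = 8*((n:ℝ)-1) by ring, show m*2 = 2*m by ring]
      rw [← mul_assoc, mul_comm (((n:ℝ)-1)^(2*m)) 8, mul_assoc, ← pow_succ]
    rw [hx, hy]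
    exact hkey
  -- step 2 : multiply
  have hEpos : (0:ℝ) ≤ (n:ℝ)^n / (((n:ℝ)-1)^m) := by positivity
  calc Real.sqrt ((n:ℝ)/(8*1*((n:ℝ)-1))) * ((n:ℝ)^n / (((n:ℝ)-1)^m))
      ≤ (((n:ℝ)-1)/(n:ℝ))^m * ((n:ℝ)^n / (((n:ℝ)-1)^m)) :=
        mul_le_mul_of_nonneg_right h1 hEpos
    _ = (n:ℝ) := by
        rw [div_pow, show (n:ℕ) = m + 1 by omega]
        have h2 : ((n:ℝ)-1)^m ≠ 0 := by positivity
        have h3 : ((n:ℝ))^m ≠ 0 := by positivity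
        rw [pow_succ]
        field_simp

lemma binEnt_symm (p : ℝ) : binEnt (1 - p) = binEnt p := by
  unfold binEnt; rw [sub_sub_cancel]; ring

/-- Entropy bounds on binomial coefficients: for `1 ≤ k ≤ n-1`,
`√(n/(8k(n-k))) 2^{n h(k/n)} ≤ C(n,k) ≤ √(n/(π k(n-k))) 2^{n h(k/n)}`. -/
theorem choose_entropy_bounds (n k : ℕ) (hk1 : 1 ≤ k) (hk2 : k ≤ n - 1) :
    Real.sqrt ((n : ℝ) / (8 * k * ((n : ℝ) - k))) * 2 ^ ((n : ℝ) * binEnt (k / n))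
      ≤ (n.choose k : ℝ) ∧
    (n.choose k : ℝ) ≤
      Real.sqrt ((n : ℝ) / (Real.pi * k * ((n : ℝ) - k))) * 2 ^ ((n : ℝ) * binEnt (k / n)) := by
  have hn2 : 2 ≤ n := by omega
  have hkn : k < n := by omega
  have hk0 : (0:ℝ) < k := by exact_mod_cast hk1
  have hn0 : (0:ℝ) < n := by exact_mod_cast Nat.pos_of_ne_zero (by omega)
  have hnk : (0:ℝ) < (n:ℝ) - k := by
    have : (k:ℝ) < n := by exact_mod_cast hkn
    linarith
  constructor
  · rcases eq_or_ne k 1 with rfl | hk1'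
    · rw [Nat.choose_one_right]
      simp only [Nat.cast_one]
      exact lower_one n hn2
    · rcases eq_or_ne k (n-1) with rfl | hk2'
      · have hc : (n.choose (n-1) : ℝ) = (n:ℝ) := by
          rw [Nat.choose_symm (by omega : 1 ≤ n), Nat.choose_one_right]
        rw [hc]
        have hcast : ((n-1:ℕ):ℝ) = (n:ℝ) - 1 := by
          have := Nat.cast_sub (R := ℝ) (by omega : 1 ≤ n); simpa using this
        rw [hcast]
        have h1 : (n:ℝ) - ((n:ℝ)-1) = 1 := by ring
        rw [h1]
        have hbe : binEnt (((n:ℝ)-1)/n) = binEnt (1/(n:ℝ)) := by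
          rw [show ((n:ℝ)-1)/n = 1 - 1/(n:ℝ) by field_simp, binEnt_symm]
        rw [hbe, show (8:ℝ)*((n:ℝ)-1)*1 = 8*1*((n:ℝ)-1) by ring]
        exact lower_one n hn2
      · have hk2'' : 2 ≤ k := by omega
        have hkn2 : k + 2 ≤ n := by omega
        rw [choose_eq n k hk1 hkn, sqrt_ratio n k hk0 hnk, entropy_pow n k hk1 hkn,
          sqrt8 n k hk0 hnk]
        exact mul_le_mul_of_nonneg_right
          (mul_le_mul_of_nonneg_right (ratio_lower n k hk2'' hkn2) (Real.sqrt_nonneg _))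
          (by positivity)
  · rw [choose_eq n k hk1 hkn, sqrt_ratio n k hk0 hnk, entropy_pow n k hk1 hkn,
      sqrtPi n k hk0 hnk]
    exact mul_le_mul_of_nonneg_right
      (mul_le_mul_of_nonneg_right (ratio_upper n k hk1 hkn) (Real.sqrt_nonneg _))
      (by positivity)
end

section
/- For every α ∈ [0, 1/2] and every natural number n, the sum of binomial coefficients ∑_{i ≤ αn} C(n,i) ≤ 2^{n·h(α)}, where h is the binary entropy function base 2. -/
open scoped Classical

/-- For `α ∈ [0, 1/2]`, the sum of binomial coefficients `C(n,i)` over `i ≤ αn` is at most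
`2^{n h(α)}`. -/
theorem sum_choose_le_two_pow_entropy (α : ℝ) (hα : α ∈ Set.Icc (0 : ℝ) (1 / 2)) (n : ℕ) :
    ∑ i ∈ (Finset.range (n + 1)).filter (fun (i : ℕ) => (i : ℝ) ≤ α * n), (n.choose i : ℝ)
      ≤ 2 ^ ((n : ℝ) * binEnt α) := by
  obtain ⟨h0, h2⟩ := hα
  rcases eq_or_lt_of_le h0 with h0' | h0'
  · -- α = 0
    have hfil : (Finset.range (n + 1)).filter (fun (i : ℕ) => (i : ℝ) ≤ α * n) = {0} := by
      ext i
      simp only [Finset.mem_filter, Finset.mem_range, Finset.mem_singleton, ← h0', zero_mul]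
      constructor
      · rintro ⟨-, hi⟩
        exact_mod_cast le_antisymm (by exact_mod_cast hi) (Nat.cast_nonneg i)
      · rintro rfl; exact ⟨Nat.succ_pos n, by norm_num⟩
    rw [hfil]
    simp [binEnt, ← h0']
  · -- 0 < α
    set β : ℝ := 1 - α with hβdef
    have hβ0 : 0 < β := by simp only [hβdef]; linarith
    have hαβ : α / β ≤ 1 := by
      rw [div_le_one hβ0]; simp only [hβdef]; linarith
    set K : ℝ := α ^ (α * n) * β ^ (β * n) with hK
    have hKpos : 0 < K := mul_pos (Real.rpow_pos_of_pos h0' _) (Real.rpow_pos_of_pos hβ0 _)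
    have hEq : (2 : ℝ) ^ ((n : ℝ) * binEnt α) = K⁻¹ := by
      have e1 : (n : ℝ) * binEnt α
          = Real.logb 2 α * (-(α * n)) + Real.logb 2 β * (-(β * n)) := by
        simp only [binEnt, ← hβdef]; ring
      rw [e1, Real.rpow_add two_pos, Real.rpow_mul (by norm_num : (0:ℝ) ≤ 2),
        Real.rpow_mul (by norm_num : (0:ℝ) ≤ 2),
        Real.rpow_logb two_pos (by norm_num) h0',
        Real.rpow_logb two_pos (by norm_num) hβ0,
        Real.rpow_neg h0'.le, Real.rpow_neg hβ0.le, hK, mul_inv]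
    rw [hEq]
    have hsub : (Finset.range (n + 1)).filter (fun (i : ℕ) => (i : ℝ) ≤ α * n)
        ⊆ Finset.range (n + 1) := Finset.filter_subset _ _
    -- key pointwise bound
    have hpt : ∀ i ∈ (Finset.range (n + 1)).filter (fun (i : ℕ) => (i : ℝ) ≤ α * n),
        (n.choose i : ℝ) ≤ K⁻¹ * ((n.choose i : ℝ) * α ^ i * β ^ (n - i)) := by
      intro i hi
      obtain ⟨hir, hile⟩ := Finset.mem_filter.mp hi
      have hin : i ≤ n := Nat.lt_succ_iff.mp (Finset.mem_range.mp hir)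
      have hKle : K ≤ α ^ i * β ^ (n - i) := by
        have hcast : ((n - i : ℕ) : ℝ) = (n : ℝ) - i := by
          push_cast [hin]; ring
        have e2 : (α ^ i * β ^ (n - i) : ℝ)
            = β ^ (n : ℝ) * (α / β) ^ (i : ℝ) := by
          rw [← Real.rpow_natCast α i, ← Real.rpow_natCast β (n - i), hcast,
            Real.div_rpow h0'.le hβ0.le, Real.rpow_sub hβ0]
          field_simp
        have e3 : K = β ^ (n : ℝ) * (α / β) ^ (α * n) := by
          have hb : β * (n : ℝ) = (n : ℝ) - α * n := by simp only [hβdef]; ring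
          rw [hK, hb, Real.rpow_sub hβ0, Real.div_rpow h0'.le hβ0.le]
          field_simp
        rw [e2, e3]
        apply mul_le_mul_of_nonneg_left _ (Real.rpow_nonneg hβ0.le _)
        exact Real.rpow_le_rpow_of_exponent_ge (div_pos h0' hβ0) hαβ hile
      have hc0 : (0 : ℝ) ≤ (n.choose i : ℝ) := Nat.cast_nonneg _
      calc (n.choose i : ℝ) = K⁻¹ * ((n.choose i : ℝ) * K) := by
            field_simp
        _ ≤ K⁻¹ * ((n.choose i : ℝ) * α ^ i * β ^ (n - i)) := by
            rw [mul_assoc (n.choose i : ℝ)]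
            exact mul_le_mul_of_nonneg_left
              (mul_le_mul_of_nonneg_left hKle hc0) (inv_nonneg.mpr hKpos.le)
    calc ∑ i ∈ (Finset.range (n + 1)).filter (fun (i : ℕ) => (i : ℝ) ≤ α * n), (n.choose i : ℝ)
        ≤ ∑ i ∈ (Finset.range (n + 1)).filter (fun (i : ℕ) => (i : ℝ) ≤ α * n),
            K⁻¹ * ((n.choose i : ℝ) * α ^ i * β ^ (n - i)) := Finset.sum_le_sum hpt
      _ = K⁻¹ * ∑ i ∈ (Finset.range (n + 1)).filter (fun (i : ℕ) => (i : ℝ) ≤ α * n),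
            ((n.choose i : ℝ) * α ^ i * β ^ (n - i)) := by rw [Finset.mul_sum]
      _ ≤ K⁻¹ * ∑ i ∈ Finset.range (n + 1),
            ((n.choose i : ℝ) * α ^ i * β ^ (n - i)) := by
          apply mul_le_mul_of_nonneg_left _ (inv_nonneg.mpr hKpos.le)
          apply Finset.sum_le_sum_of_subset_of_nonneg hsub
          intro i hi _
          positivity
      _ = K⁻¹ := by
          have hb : ∑ i ∈ Finset.range (n + 1),
              ((n.choose i : ℝ) * α ^ i * β ^ (n - i)) = 1 := by
            have h := add_pow α β n
            have hαβ1 : α + β = 1 := by simp only [hβdef]; ring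
            rw [hαβ1, one_pow] at h
            calc ∑ i ∈ Finset.range (n + 1), ((n.choose i : ℝ) * α ^ i * β ^ (n - i))
                = ∑ i ∈ Finset.range (n + 1), α ^ i * β ^ (n - i) * (n.choose i : ℝ) :=
                  Finset.sum_congr rfl fun i _ => by ring
              _ = 1 := h.symm
          rw [hb, mul_one]
end

section
/- Let φ(α) = p·h(α/p) + (1−p)·h(α/(1−p)) for 0 < α < min(p, 1−p), where 0 < p < 1 and h is the binary entropy base 2. Then φ is strictly increasing on (0, p(1−p)), attains its maximum at α = p(1−p) with φ(p(1−p)) = h(p), and is strictly decreasing on (p(1−p), min(p,1−p)). -/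
/-- `φ(α) = p h(α/p) + (1-p) h(α/(1-p))`. -/
noncomputable def phiEnt (p α : ℝ) : ℝ := p * binEnt (α / p) + (1 - p) * binEnt (α / (1 - p))

/-- Auxiliary closed form for `phiEnt` using natural logarithms. -/
noncomputable def phiAux (p α : ℝ) : ℝ :=
  (p * Real.log p + (1 - p) * Real.log (1 - p) - 2 * (α * Real.log α)
    - (p - α) * Real.log (p - α) - (1 - p - α) * Real.log (1 - p - α)) / Real.log 2

lemma log2_pos : (0:ℝ) < Real.log 2 := Real.log_pos (by norm_num)

lemma phiEnt_eq_phiAux (p α : ℝ) (hp : 0 < p) (hp1 : p < 1) (hα : 0 < α) (hαp : α < p)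
    (hα1 : α < 1 - p) : phiEnt p α = phiAux p α := by
  have h2 : Real.log 2 ≠ 0 := ne_of_gt log2_pos
  have hpα : (0:ℝ) < p - α := by linarith
  have h1α : (0:ℝ) < 1 - p - α := by linarith
  have hp1' : (0:ℝ) < 1 - p := by linarith
  have e1 : Real.log (α / p) = Real.log α - Real.log p := Real.log_div hα.ne' hp.ne'
  have e2 : (1 : ℝ) - α / p = (p - α) / p := by field_simp
  have e3 : Real.log ((p - α) / p) = Real.log (p - α) - Real.log p :=
    Real.log_div hpα.ne' hp.ne'
  have e4 : Real.log (α / (1 - p)) = Real.log α - Real.log (1 - p) :=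
    Real.log_div hα.ne' hp1'.ne'
  have e5 : (1 : ℝ) - α / (1 - p) = (1 - p - α) / (1 - p) := by field_simp
  have e6 : Real.log ((1 - p - α) / (1 - p)) = Real.log (1 - p - α) - Real.log (1 - p) :=
    Real.log_div h1α.ne' hp1'.ne'
  unfold phiEnt binEnt phiAux
  rw [e2, e5]
  simp only [Real.logb, e1, e3, e4, e6]
  field_simp
  ring

lemma hasDerivAt_phiAux (p x : ℝ) (hx : 0 < x) (hxp : x < p) (hx1 : x < 1 - p) :
    HasDerivAt (phiAux p)
      ((Real.log (p - x) + Real.log (1 - p - x) - 2 * Real.log x) / Real.log 2) x := by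
  have hpx : (0:ℝ) < p - x := by linarith
  have h1x : (0:ℝ) < 1 - p - x := by linarith
  have h1 : HasDerivAt (fun α : ℝ => α * Real.log α) (Real.log x + 1) x :=
    Real.hasDerivAt_mul_log hx.ne'
  have hin1 : HasDerivAt (fun α : ℝ => p - α) (-1) x := (hasDerivAt_id x).const_sub p
  have hin2 : HasDerivAt (fun α : ℝ => 1 - p - α) (-1) x := (hasDerivAt_id x).const_sub (1 - p)
  have h2 : HasDerivAt (fun α : ℝ => (p - α) * Real.log (p - α))
      ((Real.log (p - x) + 1) * (-1)) x :=
    (Real.hasDerivAt_mul_log hpx.ne').comp x hin1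
  have h3 : HasDerivAt (fun α : ℝ => (1 - p - α) * Real.log (1 - p - α))
      ((Real.log (1 - p - x) + 1) * (-1)) x :=
    (Real.hasDerivAt_mul_log h1x.ne').comp x hin2
  have H := ((((hasDerivAt_const x (p * Real.log p + (1 - p) * Real.log (1 - p))).sub
      (h1.const_mul 2)).sub h2).sub h3).div_const (Real.log 2)
  refine H.congr_deriv ?_
  ring

lemma continuous_phiAux (p : ℝ) : Continuous (phiAux p) := by
  unfold phiAux
  have h1 : Continuous fun α : ℝ => α * Real.log α := Real.continuous_mul_log
  have h2 : Continuous fun α : ℝ => (p - α) * Real.log (p - α) :=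
    Real.continuous_mul_log.comp (continuous_const.sub continuous_id)
  have h3 : Continuous fun α : ℝ => (1 - p - α) * Real.log (1 - p - α) :=
    Real.continuous_mul_log.comp (continuous_const.sub continuous_id)
  fun_prop

/-- `φ` is strictly increasing on `(0, p(1-p)]`, attains its maximum `h(p)` at `α = p(1-p)`,
and is strictly decreasing on `[p(1-p), min(p, 1-p))`. -/
theorem phiEnt_monotonicity (p : ℝ) (hp : 0 < p) (hp1 : p < 1) :
    StrictMonoOn (phiEnt p) (Set.Ioc 0 (p * (1 - p))) ∧
    phiEnt p (p * (1 - p)) = binEnt p ∧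
    StrictAntiOn (phiEnt p) (Set.Ico (p * (1 - p)) (min p (1 - p))) ∧
    (∀ α ∈ Set.Ioo 0 (min p (1 - p)), phiEnt p α ≤ phiEnt p (p * (1 - p))) := by
  have hp1' : (0:ℝ) < 1 - p := by linarith
  have hm : 0 < p * (1 - p) := by positivity
  have hmp : p * (1 - p) < p := by nlinarith
  have hm1 : p * (1 - p) < 1 - p := by nlinarith
  have hmmin : p * (1 - p) < min p (1 - p) := lt_min hmp hm1
  -- EqOn on the relevant sets
  have hEq : ∀ x ∈ Set.Ioo (0:ℝ) (min p (1 - p)), phiEnt p x = phiAux p x := by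
    intro x hx
    exact phiEnt_eq_phiAux p x hp hp1 hx.1 (lt_of_lt_of_le hx.2 (min_le_left _ _))
      (lt_of_lt_of_le hx.2 (min_le_right _ _))
  have hsub1 : Set.Ioc (0:ℝ) (p * (1 - p)) ⊆ Set.Ioo 0 (min p (1 - p)) := by
    intro x hx; exact ⟨hx.1, lt_of_le_of_lt hx.2 hmmin⟩
  have hsub2 : Set.Ico (p * (1 - p)) (min p (1 - p)) ⊆ Set.Ioo 0 (min p (1 - p)) := by
    intro x hx; exact ⟨lt_of_lt_of_le hm hx.1, hx.2⟩
  -- strict monotonicity of phiAux on Ioc 0 m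
  have hmono : StrictMonoOn (phiAux p) (Set.Ioc 0 (p * (1 - p))) := by
    apply strictMonoOn_of_deriv_pos (convex_Ioc _ _) (continuous_phiAux p).continuousOn
    intro x hx
    rw [interior_Ioc] at hx
    have hx0 : 0 < x := hx.1
    have hxm : x < p * (1 - p) := hx.2
    have hxp : x < p := lt_trans hxm hmp
    have hx1 : x < 1 - p := lt_trans hxm hm1
    rw [(hasDerivAt_phiAux p x hx0 hxp hx1).deriv]
    apply div_pos _ log2_pos
    have hprod : x * x < (p - x) * (1 - p - x) := by nlinarith
    have hlog : Real.log (x * x) < Real.log ((p - x) * (1 - p - x)) :=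
      Real.log_lt_log (by positivity) hprod
    rw [Real.log_mul hx0.ne' hx0.ne',
        Real.log_mul (by linarith : p - x ≠ 0) (by linarith : 1 - p - x ≠ 0)] at hlog
    linarith
  -- strict antitonicity of phiAux on Ico m (min p (1-p))
  have hanti : StrictAntiOn (phiAux p) (Set.Ico (p * (1 - p)) (min p (1 - p))) := by
    apply strictAntiOn_of_deriv_neg (convex_Ico _ _) (continuous_phiAux p).continuousOn
    intro x hx
    rw [interior_Ico] at hx
    have hx0 : 0 < x := lt_trans hm hx.1
    have hxp : x < p := lt_of_lt_of_le hx.2 (min_le_left _ _)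
    have hx1 : x < 1 - p := lt_of_lt_of_le hx.2 (min_le_right _ _)
    rw [(hasDerivAt_phiAux p x hx0 hxp hx1).deriv]
    apply div_neg_of_neg_of_pos _ log2_pos
    have hxm : p * (1 - p) < x := hx.1
    have hprod : (p - x) * (1 - p - x) < x * x := by nlinarith
    have hlog : Real.log ((p - x) * (1 - p - x)) < Real.log (x * x) :=
      Real.log_lt_log (by nlinarith) hprod
    rw [Real.log_mul hx0.ne' hx0.ne',
        Real.log_mul (by linarith : p - x ≠ 0) (by linarith : 1 - p - x ≠ 0)] at hlog
    linarith
  have hmono' : StrictMonoOn (phiEnt p) (Set.Ioc 0 (p * (1 - p))) := by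
    intro a ha b hb hab
    rw [hEq a (hsub1 ha), hEq b (hsub1 hb)]
    exact hmono ha hb hab
  have hanti' : StrictAntiOn (phiEnt p) (Set.Ico (p * (1 - p)) (min p (1 - p))) := by
    intro a ha b hb hab
    rw [hEq a (hsub2 ha), hEq b (hsub2 hb)]
    exact hanti ha hb hab
  -- value at the max
  have hval : phiEnt p (p * (1 - p)) = binEnt p := by
    rw [phiEnt_eq_phiAux p _ hp hp1 hm hmp hm1]
    unfold phiAux binEnt
    have e1 : p - p * (1 - p) = p ^ 2 := by ring
    have e2 : 1 - p - p * (1 - p) = (1 - p) ^ 2 := by ring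
    have l1 : Real.log (p ^ 2) = 2 * Real.log p := by
      rw [Real.log_pow]; norm_num
    have l2 : Real.log ((1 - p) ^ 2) = 2 * Real.log (1 - p) := by
      rw [Real.log_pow]; norm_num
    have l3 : Real.log (p * (1 - p)) = Real.log p + Real.log (1 - p) :=
      Real.log_mul hp.ne' hp1'.ne'
    rw [e1, e2, l1, l2, l3]
    simp only [Real.logb]
    field_simp
    ring
  refine ⟨hmono', hval, hanti', ?_⟩
  intro α hα
  rcases lt_trichotomy α (p * (1 - p)) with h | h | h
  · exact le_of_lt (hmono' ⟨hα.1, le_of_lt h⟩ ⟨hm, le_refl _⟩ h)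
  · rw [h]
  · exact le_of_lt (hanti' ⟨le_refl _, hmmin⟩ ⟨le_of_lt h, hα.2⟩ h)
end
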